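/- arXiv:1711.07150 — 2 statements merged into one kernel-verified Lean document; each statement's English description precedes it below -/
import Mathlib

section
/- Let ψ : [r₀, ∞) → (0, ∞) be increasing, A > 0, q a positive integer, and suppose limsup_{r→∞} log(ψ(r)) / (log^[q-1] r)^A = ∞. Then for every finite G > 0 the integral ∫_{r₀}^{∞} ψ(r) / (exp((log^[q-1] r)^A))^{G+1} dr diverges. -/
/-!
Suppose the integral converged, with value `I`. Write `L = log^[q-1]`. Past the threshold
`exp^[q-1] 1` the function `L` is at least `1`, increasing, and `L (r + 1) ≤ L r + 1 ≤ 2 L r`.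
Since `ψ` is increasing, on `[r, r + 1]` the integrand is therefore at least
`ψ r / exp ((G + 1) 2^A (L r)^A)`. The limsup hypothesis gives arbitrarily large `r` with
`log ψ r ≥ ((G + 1) 2^A + log (I + 1)) (L r)^A`, and for these the integral over `[r, r + 1]`
already exceeds `I`.
-/

open Filter MeasureTheory Set

namespace Real

lemma one_le_iterate_exp (k : ℕ) : 1 ≤ exp^[k] 1 := by
  induction k with
  | zero => rfl
  | succ k ih =>
    rw [Function.iterate_succ_apply']
    exact one_le_exp (by linarith)

lemma iterate_exp_le_log {k : ℕ} {r : ℝ} (hr : exp^[k + 1] 1 ≤ r) : exp^[k] 1 ≤ log r := by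
  rw [Function.iterate_succ_apply'] at hr
  exact (le_log_iff_exp_le ((exp_pos _).trans_le hr)).2 hr

lemma one_le_iterate_log {k : ℕ} {r : ℝ} (hr : exp^[k] 1 ≤ r) : 1 ≤ log^[k] r := by
  induction k generalizing r with
  | zero => exact hr
  | succ k ih => exact ih (iterate_exp_le_log hr)

lemma monotoneOn_iterate_log (k : ℕ) : MonotoneOn (log^[k]) (Ici (exp^[k] 1)) := by
  induction k with
  | zero => exact monotone_id.monotoneOn _
  | succ k ih =>
    intro r hr s hs hrs
    have hr0 : 0 < r := zero_lt_one.trans_le ((one_le_iterate_exp _).trans hr)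
    exact ih (iterate_exp_le_log hr) (iterate_exp_le_log (hr.trans hrs)) (log_le_log hr0 hrs)

lemma log_add_one_le {x : ℝ} (hx : 1 ≤ x) : log (x + 1) ≤ log x + 1 := by
  have hx0 : 0 < x := zero_lt_one.trans_le hx
  have h := log_le_sub_one_of_pos (div_pos (by linarith) hx0 : 0 < (x + 1) / x)
  rw [log_div (by linarith) hx0.ne', add_div, div_self hx0.ne'] at h
  linarith [div_le_one_of_le₀ hx hx0.le]

lemma iterate_log_add_one_le {k : ℕ} {r : ℝ} (hr : exp^[k] 1 ≤ r) :
    log^[k] (r + 1) ≤ log^[k] r + 1 := by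
  induction k generalizing r with
  | zero => rfl
  | succ k ih =>
    have hlog := iterate_exp_le_log hr
    have hr1 : 1 ≤ r := (one_le_iterate_exp _).trans hr
    rw [Function.iterate_succ_apply, Function.iterate_succ_apply]
    calc log^[k] (log (r + 1)) ≤ log^[k] (log r + 1) :=
          monotoneOn_iterate_log k (hlog.trans (log_le_log (by linarith) (by linarith)))
            (hlog.trans (by linarith)) (log_add_one_le hr1)
      _ ≤ log^[k] (log r) + 1 := ih hlog

lemma rpow_iterate_log_le_two_rpow_mul {k : ℕ} {A r s : ℝ} (hA : 0 ≤ A) (hr : exp^[k] 1 ≤ r)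
    (hs : s ∈ Icc r (r + 1)) : (log^[k] s) ^ A ≤ 2 ^ A * (log^[k] r) ^ A := by
  have hL1 := one_le_iterate_log hr
  have hLs : log^[k] s ≤ 2 * log^[k] r :=
    calc log^[k] s ≤ log^[k] (r + 1) :=
          monotoneOn_iterate_log k (hr.trans hs.1) (hr.trans (by linarith)) hs.2
      _ ≤ 2 * log^[k] r := by linarith [iterate_log_add_one_le hr]
  rw [← mul_rpow zero_le_two (by linarith)]
  exact rpow_le_rpow (by linarith [one_le_iterate_log (hr.trans hs.1)]) hLs hA

end Real

lemma frequently_le_of_limsup_coe_eq_top {α : Type*} {l : Filter α} {u : α → ℝ}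
    (h : limsup (fun x => (u x : EReal)) l = ⊤) (M : ℝ) : ∃ᶠ x in l, M ≤ u x :=
  (frequently_lt_of_lt_limsup (by isBoundedDefault) (h ▸ EReal.coe_lt_top M)).mono fun _ hx =>
    (EReal.coe_lt_coe_iff.1 hx).le

lemma le_setIntegral_Ici_of_le_on_Icc {f : ℝ → ℝ} {r₀ r c : ℝ}
    (hf : IntegrableOn f (Ici r₀)) (hf0 : ∀ s ∈ Ici r₀, 0 ≤ f s) (hr : r₀ ≤ r)
    (hc : ∀ s ∈ Icc r (r + 1), c ≤ f s) :
    c ≤ ∫ s in Ici r₀, f s := by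
  have hsub : Icc r (r + 1) ⊆ Ici r₀ := fun s hs => hr.trans hs.1
  calc c = c * volume.real (Icc r (r + 1)) := by simp
    _ ≤ ∫ s in Icc r (r + 1), f s :=
        setIntegral_ge_of_const_le_real measurableSet_Icc (by simp) hc (hf.mono_set hsub)
    _ ≤ ∫ s in Ici r₀, f s :=
        setIntegral_mono_set hf ((ae_restrict_iff' measurableSet_Ici).2 (.of_forall hf0))
          hsub.eventuallyLE

theorem stmt_2_general (q : ℕ) (A r₀ : ℝ) (hA : 0 < A)
    (ψ : ℝ → ℝ) (hψpos : ∀ r ∈ Ici r₀, 0 < ψ r) (hψmono : MonotoneOn ψ (Ici r₀))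
    (hσ : Filter.limsup
      (fun r => ((Real.log (ψ r) / (Real.log^[q - 1] r) ^ A : ℝ) : EReal)) atTop = ⊤) :
    ∀ G : ℝ, 0 < G →
      ¬ IntegrableOn
        (fun r => ψ r / Real.exp ((Real.log^[q - 1] r) ^ A) ^ (G + 1)) (Ici r₀) := by
  intro G hG hint
  set L := Real.log^[q - 1]
  set f := fun r => ψ r / Real.exp ((L r) ^ A) ^ (G + 1)
  have hf0 : ∀ r ∈ Ici r₀, 0 ≤ f r := fun r hr => by have := hψpos r hr; positivity
  set I := ∫ r in Ici r₀, f r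
  have hI : 0 ≤ I := setIntegral_nonneg measurableSet_Ici hf0
  set C := (G + 1) * 2 ^ A
  obtain ⟨r, hψr, hr⟩ :=
    ((frequently_le_of_limsup_coe_eq_top hσ (C + Real.log (I + 1))).and_eventually
      (eventually_ge_atTop (max r₀ (Real.exp^[q - 1] 1)))).exists
  obtain ⟨hr₀, hrL⟩ := max_le_iff.1 hr
  have hLA : 1 ≤ L r ^ A := Real.one_le_rpow (Real.one_le_iterate_log hrL) hA.le
  have hψ : Real.exp ((C + Real.log (I + 1)) * L r ^ A) ≤ ψ r := by
    rw [← Real.exp_log (hψpos r hr₀)]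
    exact Real.exp_le_exp.2 ((le_div_iff₀ (by positivity)).1 hψr)
  have hfr : ∀ s ∈ Icc r (r + 1), I + 1 ≤ f s := by
    intro s hs
    have hden : Real.exp (L s ^ A) ^ (G + 1) ≤ Real.exp (C * L r ^ A) := by
      rw [← Real.exp_mul, Real.exp_le_exp, mul_comm, mul_assoc]
      exact mul_le_mul_of_nonneg_left (Real.rpow_iterate_log_le_two_rpow_mul hA.le hrL hs)
        (by linarith)
    calc I + 1 = Real.exp (Real.log (I + 1)) := (Real.exp_log (by linarith)).symm
      _ ≤ Real.exp (Real.log (I + 1) * L r ^ A) :=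
          Real.exp_le_exp.2 (le_mul_of_one_le_right (Real.log_nonneg (by linarith)) hLA)
      _ = Real.exp ((C + Real.log (I + 1)) * L r ^ A) / Real.exp (C * L r ^ A) := by
          rw [← Real.exp_sub]; ring_nf
      _ ≤ f s := div_le_div₀ (hψpos s (hr₀.trans hs.1)).le
          (hψ.trans (hψmono hr₀ (hr₀.trans hs.1) hs.1)) (by positivity) hden
  linarith [le_setIntegral_Ici_of_le_on_Icc hint hf0 hr₀ hfr]

/-- If limsup_{r→∞} log ψ(r)/(log^[q-1] r)^A = ∞, then the integral
∫_{r₀}^∞ ψ(r)/(exp((log^[q-1] r)^A))^{G+1} dr diverges for every finite G > 0. -/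
theorem stmt_2 (q : ℕ) (hq : 0 < q) (A r₀ : ℝ) (hA : 0 < A)
    (ψ : ℝ → ℝ) (hψpos : ∀ r ∈ Ici r₀, 0 < ψ r) (hψmono : MonotoneOn ψ (Ici r₀))
    (hσ : Filter.limsup
      (fun r => ((Real.log (ψ r) / (Real.log^[q - 1] r) ^ A : ℝ) : EReal)) atTop = ⊤) :
    ∀ G : ℝ, 0 < G →
      ¬ IntegrableOn
        (fun r => ψ r / Real.exp ((Real.log^[q - 1] r) ^ A) ^ (G + 1)) (Ici r₀) :=
  stmt_2_general q A r₀ hA ψ hψpos hψmono hσ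
end

section
/- Let ψ : [r₀, ∞) → (0, ∞) be increasing, A > 0, q a positive integer, and suppose liminf_{r→∞} log(ψ(r)) / (log^[q-1] r)^A = ∞. Then for every finite G > 0 the integral ∫_{r₀}^{∞} ψ(r) / (exp((log^[q-1] r)^A))^{G+1} dr diverges. -/
open Filter MeasureTheory Set

/-!
Write `L r = (log^[q-1] r)^A`, which is eventually positive. The liminf hypothesis gives
`log ψ r > (G + 1) L r` eventually, i.e. `|ψ r| / exp (L r)^(G+1) > 1` on a tail `[b, ∞)`.
A function whose norm is bounded below by a positive constant on a half-line of infinite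
measure is not integrable there.
-/

theorem Real.tendsto_iterate_log_atTop (n : ℕ) : Tendsto Real.log^[n] atTop atTop := by
  induction n with
  | zero => exact tendsto_id
  | succ n ih => simpa only [Function.iterate_succ'] using Real.tendsto_log_atTop.comp ih

theorem Filter.eventually_gt_of_liminf_coe_eq_top {α : Type*} {l : Filter α} {u : α → ℝ}
    (h : liminf (fun x => (u x : EReal)) l = ⊤) (b : ℝ) : ∀ᶠ x in l, b < u x := by
  filter_upwards [eventually_lt_of_lt_liminf (h ▸ EReal.coe_lt_top b)] with x hx
  exact_mod_cast hx

theorem not_integrableOn_Ici_of_eventually_le_norm {E : Type*} [NormedAddCommGroup E]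
    {f : ℝ → E} {a c : ℝ} (hc : 0 < c) (hf : ∀ᶠ x in atTop, c ≤ ‖f x‖) :
    ¬ IntegrableOn f (Ici a) := by
  intro hint
  obtain ⟨b, hb⟩ := (hf.and (eventually_ge_atTop a)).exists_forall_of_atTop
  have hconst : IntegrableOn (fun _ => c) (Ici b) := by
    refine (hint.mono_set (Ici_subset_Ici.mpr (hb b le_rfl).2)).norm.mono'
      aestronglyMeasurable_const ?_
    filter_upwards [ae_restrict_mem measurableSet_Ici] with x hx
    simpa only [Real.norm_eq_abs, abs_of_pos hc] using (hb x hx).1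
  simp [integrableOn_const_iff, hc.ne', Real.volume_Ici] at hconst

theorem Real.one_lt_abs_div_exp_rpow_of_lt_log_div {y L c : ℝ} (hc : 0 ≤ c) (hL : 0 < L)
    (h : c < Real.log y / L) : 1 < |y / Real.exp L ^ c| := by
  have hlog : c * L < Real.log y := (lt_div_iff₀ hL).mp h
  have hy : y ≠ 0 := by
    rintro rfl
    simp only [Real.log_zero] at hlog
    nlinarith
  rw [abs_div, abs_of_pos (Real.rpow_pos_of_pos (Real.exp_pos L) c),
    one_lt_div (Real.rpow_pos_of_pos (Real.exp_pos L) c), ← Real.exp_mul,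
    mul_comm, ← Real.exp_log_eq_abs hy]
  exact Real.exp_lt_exp.mpr hlog

theorem stmt_9_general (q : ℕ) (A r₀ : ℝ)
    (ψ : ℝ → ℝ)
    (hτ : Filter.liminf
      (fun r => ((Real.log (ψ r) / (Real.log^[q - 1] r) ^ A : ℝ) : EReal)) atTop = ⊤) :
    ∀ G : ℝ, 0 < G →
      ¬ IntegrableOn
        (fun r => ψ r / Real.exp ((Real.log^[q - 1] r) ^ A) ^ (G + 1)) (Ici r₀) := by
  intro G hG
  refine not_integrableOn_Ici_of_eventually_le_norm one_pos ?_
  filter_upwards [eventually_gt_of_liminf_coe_eq_top hτ (G + 1),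
    (Real.tendsto_iterate_log_atTop (q - 1)).eventually_gt_atTop 0] with r hratio hbase
  exact (Real.one_lt_abs_div_exp_rpow_of_lt_log_div (by linarith)
    (Real.rpow_pos_of_pos hbase A) hratio).le

/-- If liminf_{r→∞} log ψ(r)/(log^[q-1] r)^A = ∞, then the integral
∫_{r₀}^∞ ψ(r)/(exp((log^[q-1] r)^A))^{G+1} dr diverges for every finite G > 0. -/
theorem stmt_9 (q : ℕ) (hq : 0 < q) (A r₀ : ℝ) (hA : 0 < A)
    (ψ : ℝ → ℝ) (hψpos : ∀ r ∈ Ici r₀, 0 < ψ r) (hψmono : MonotoneOn ψ (Ici r₀))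
    (hτ : Filter.liminf
      (fun r => ((Real.log (ψ r) / (Real.log^[q - 1] r) ^ A : ℝ) : EReal)) atTop = ⊤) :
    ∀ G : ℝ, 0 < G →
      ¬ IntegrableOn
        (fun r => ψ r / Real.exp ((Real.log^[q - 1] r) ^ A) ^ (G + 1)) (Ici r₀) :=
  stmt_9_general q A r₀ ψ hτ
end
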